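/- Let g be an element of the Farey group with ‖g‖ = n > 0, and write the image of {0, 1, ∞} under the Möbius transformation g as {p, r, q} with p < r < q ≤ ∞. Then either (p, r, q) = (n, n+1, ∞), or (p, r, q) = (−n, 1−n, ∞), or there exists m ∈ ℤ such that p − m and q − m are consecutive terms of the Farey sequence F_{n−|m|−1} and r − m = (p − m) ⊕ (q − m). -/

import Mathlib

open scoped MatrixGroups OnePoint
open Matrix MeasureTheory Filter Topology

noncomputable section

namespace Farey

/-- Möbius action of a real 2×2 matrix on `ℝ ∪ {∞}`. -/
def mobAux (M : Matrix (Fin 2) (Fin 2) ℝ) : OnePoint ℝ → OnePoint ℝ :=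
  OnePoint.rec (if M 1 0 = 0 then ∞ else ((M 0 0 / M 1 0 : ℝ) : OnePoint ℝ))
    (fun r => if M 1 0 * r + M 1 1 = 0 then ∞
      else (((M 0 0 * r + M 0 1) / (M 1 0 * r + M 1 1) : ℝ) : OnePoint ℝ))

@[simp] lemma mobAux_infty (M : Matrix (Fin 2) (Fin 2) ℝ) :
    mobAux M ∞ = if M 1 0 = 0 then ∞ else ((M 0 0 / M 1 0 : ℝ) : OnePoint ℝ) := rfl

@[simp] lemma mobAux_coe (M : Matrix (Fin 2) (Fin 2) ℝ) (r : ℝ) :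
    mobAux M (r : OnePoint ℝ) = if M 1 0 * r + M 1 1 = 0 then ∞
      else (((M 0 0 * r + M 0 1) / (M 1 0 * r + M 1 1) : ℝ) : OnePoint ℝ) := rfl

lemma mobAux_neg (M : Matrix (Fin 2) (Fin 2) ℝ) : mobAux (-M) = mobAux M := by
  funext x
  induction x using OnePoint.rec with
  | infty => simp [Matrix.neg_apply, neg_eq_zero, neg_div_neg_eq]
  | coe r =>
      rw [mobAux_coe, mobAux_coe]
      have h1 : (-M) 1 0 * r + (-M) 1 1 = -(M 1 0 * r + M 1 1) := by
        simp [Matrix.neg_apply]; ring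
      have h0 : (-M) 0 0 * r + (-M) 0 1 = -(M 0 0 * r + M 0 1) := by
        simp [Matrix.neg_apply]; ring
      rw [h1, h0]
      simp only [neg_eq_zero, neg_div_neg_eq]

end Farey

namespace Farey

/-- Möbius action of an integral 2×2 special linear matrix on `ℝ ∪ {∞}`. -/
def mobSL (g : SL(2, ℤ)) : OnePoint ℝ → OnePoint ℝ :=
  mobAux ((g : Matrix (Fin 2) (Fin 2) ℤ).map (Int.cast : ℤ → ℝ))

lemma mobSL_mul_center (g z : SL(2, ℤ)) (hz : z ∈ Subgroup.center SL(2, ℤ)) :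
    mobSL (g * z) = mobSL g := by
  obtain ⟨r, hr, hscalar⟩ := Matrix.SpecialLinearGroup.mem_center_iff.mp hz
  have hr' : r = 1 ∨ r = -1 := by
    have : IsUnit r := IsUnit.of_mul_eq_one (a := r) (r ^ 1) (by
      simpa [pow_succ, Fintype.card_fin] using hr)
    exact Int.isUnit_iff.mp this
  rcases hr' with h1 | h1
  · have : z = 1 := by
      ext i j
      have := congrFun (congrFun hscalar i) j
      simp [h1] at this
      simp [← this]
    simp [this]
  · have hzmat : (z : Matrix (Fin 2) (Fin 2) ℤ) = -1 := by
      ext i j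
      have := congrFun (congrFun hscalar i) j
      simp [h1] at this
      simp [← this]
    unfold mobSL
    have : ((g * z : SL(2,ℤ)) : Matrix (Fin 2) (Fin 2) ℤ) = -(g : Matrix (Fin 2) (Fin 2) ℤ) := by
      rw [Matrix.SpecialLinearGroup.coe_mul, hzmat]
      simp
    rw [this]
    have hmap : ((-(g : Matrix (Fin 2) (Fin 2) ℤ)).map (Int.cast : ℤ → ℝ))
        = -(((g : Matrix (Fin 2) (Fin 2) ℤ)).map (Int.cast : ℤ → ℝ)) := by
      ext i j
      simp
    rw [hmap, mobAux_neg]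

/-- Möbius action of an element of `PSL(2,ℤ)` on `ℝ ∪ {∞}`. -/
def mob (x : PSL(2, ℤ)) : OnePoint ℝ → OnePoint ℝ :=
  Quotient.liftOn' x mobSL (by
    intro g h hgh
    have hmem : g⁻¹ * h ∈ Subgroup.center SL(2, ℤ) := QuotientGroup.leftRel_apply.mp hgh
    have : h = g * (g⁻¹ * h) := by group
    rw [this, mobSL_mul_center g _ hmem])

end Farey

namespace Farey

/-- The matrix `A = [[1,-2],[1,-1]]` as an element of `SL(2,ℤ)`. -/
def A : SL(2, ℤ) := ⟨!![1, -2; 1, -1], by norm_num [Matrix.det_fin_two_of]⟩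

/-- The matrix `B = [[0,-1],[1,0]]` as an element of `SL(2,ℤ)`. -/
def B : SL(2, ℤ) := ⟨!![0, -1; 1, 0], by norm_num [Matrix.det_fin_two_of]⟩

/-- The matrix `C = [[1,-1],[2,-1]]` as an element of `SL(2,ℤ)`. -/
def C : SL(2, ℤ) := ⟨!![1, -1; 2, -1], by norm_num [Matrix.det_fin_two_of]⟩

/-- The element `a ∈ PSL(2,ℤ)`. -/
def a : PSL(2, ℤ) := QuotientGroup.mk A

/-- The element `b ∈ PSL(2,ℤ)`. -/
def b : PSL(2, ℤ) := QuotientGroup.mk B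

/-- The element `c ∈ PSL(2,ℤ)`. -/
def c : PSL(2, ℤ) := QuotientGroup.mk C

/-- The Farey group: the subgroup of `PSL(2,ℤ)` generated by `a`, `b`, `c`. -/
def fareyGroup : Subgroup PSL(2, ℤ) := Subgroup.closure {a, b, c}

/-- The word length of an element of `PSL(2,ℤ)` with respect to the generators
`a`, `b`, `c` of the Farey group. -/
def wordLength (x : PSL(2, ℤ)) : ℕ :=
  sInf {n | ∃ l : List PSL(2, ℤ), l.length = n ∧ (∀ s ∈ l, s = a ∨ s = b ∨ s = c) ∧ l.prod = x}

/-- The sphere of radius `n` in the Farey group for the word metric w.r.t. `{a,b,c}`. -/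
def sphere (n : ℕ) : Set PSL(2, ℤ) := {x | x ∈ fareyGroup ∧ wordLength x = n}

end Farey

namespace Farey

/-- The mediant of two rationals, `p₁/q₁ ⊕ p₂/q₂ = (p₁+p₂)/(q₁+q₂)` (in lowest terms). -/
def mediant (p q : ℚ) : ℚ := ((p.num + q.num : ℤ) : ℚ) / (((p.den : ℤ) + (q.den : ℤ) : ℤ) : ℚ)

/-- Insert the mediant between every two consecutive entries of a list of rationals. -/
def insertMediants : List ℚ → List ℚ
  | p :: q :: rest => p :: mediant p q :: insertMediants (q :: rest)
  | l => l

/-- The Farey sequences: `F_0 = (0,1)`, and `F_{n+1}` is obtained from `F_n` by inserting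
mediants between consecutive terms. -/
def fareySeq : ℕ → List ℚ
  | 0 => [0, 1]
  | n + 1 => insertMediants (fareySeq n)

/-- `p, q` are consecutive terms of the Farey sequence `F_n`. -/
def IsFareyPairIn (n : ℕ) (p q : ℚ) : Prop :=
  ∃ i : ℕ, (fareySeq n)[i]? = some p ∧ (fareySeq n)[i + 1]? = some q

/-- `p, q` form a Farey pair: they are consecutive terms of some Farey sequence. -/
def IsFareyPair (p q : ℚ) : Prop := ∃ n : ℕ, IsFareyPairIn n p q

/-- The `k`-th summand (`k = 0, 1, 2, …`) in the series defining Minkowski's question mark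
function: `(−1)^k 2^{−(a₁+⋯+a_{k+1})}` when the continued fraction expansion
`x = [a₀; a₁, a₂, …]` has at least `k+1` partial denominators and `0` otherwise. -/
def qmTerm (x : ℝ) (k : ℕ) : ℝ :=
  match (List.range (k + 1)).mapM (fun i => (GenContFract.of x).partDens.get? i) with
  | none => 0
  | some l => (-1 : ℝ) ^ k * (2 : ℝ) ^ (-(l.sum))

/-- Minkowski's question mark function on `[0,1]`:
`?(x) = 2 ∑_{k≥1} (−1)^{k+1} 2^{−(a₁+⋯+a_k)}` for `x = [0; a₁, a₂, …]`, `?(1) = 1`. -/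
def questionMark (x : ℝ) : ℝ := if x = 1 then 1 else 2 * ∑' k : ℕ, qmTerm x k

/-- The extended Minkowski function `M̄(q) = (1/3)(∑_{k=−∞}^{m−1} 2^{−|k|} + ?(q−m)·2^{−|m|})`
for `q ∈ [m, m+1]`. -/
def extM (q : ℝ) : ℝ :=
  (1 / 3) * ((∑' j : ℕ, (2 : ℝ) ^ (-|⌊q⌋ - 1 - (j : ℤ)|)) +
    questionMark (q - ⌊q⌋) * (2 : ℝ) ^ (-|⌊q⌋|))

instance : MeasurableSpace (OnePoint ℝ) := borel _
instance : BorelSpace (OnePoint ℝ) := ⟨rfl⟩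

/-- `μ` is the extended Minkowski measure: the Borel probability measure on `ℝ ∪ {∞}` giving
no mass to `{∞}` whose cumulative distribution function is the extended Minkowski function. -/
def IsExtMinkowskiMeasure (μ : Measure (OnePoint ℝ)) : Prop :=
  IsProbabilityMeasure μ ∧ μ {∞} = 0 ∧
    ∀ u v : ℝ, u ≤ v →
      μ ((fun r : ℝ => (r : OnePoint ℝ)) '' Set.Ico u v) = ENNReal.ofReal (extM v - extM u)

end Farey

namespace Farey

/-!
The Farey group is generated by three involutions, and `g ↦ g {0, 1, ∞}` matches its elements
with the triangles of the Farey tessellation, right multiplication by a generator moving to one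
of the three triangles adjacent to the current one. Words in the generators are thus walks in
the tree dual to the tessellation, rooted at `{0, 1, ∞}`, and a word of minimal length never
steps back towards the root. Going down from `{n, n + 1, ∞}` or `{-n, 1 - n, ∞}` one either
stays in the fan at `∞` or enters the translate by `±n` of the triangles below `[0, 1]`; there
each step replaces an edge `p, q` by `p, p ⊕ q` or by `p ⊕ q, q`, which is the passage from
`F_k` to `F_{k+1}`. The triangles are followed through matrices whose columns are primitive
vectors of their vertices; adjacent vertices form a unimodular pair, which keeps the mediant
in lowest terms.
-/

lemma mediant_num_den {p q : ℚ} (h : q.num * p.den - p.num * q.den = 1) :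
    (mediant p q).num = p.num + q.num ∧ ((mediant p q).den : ℤ) = p.den + q.den := by
  have hden : (0 : ℤ) < p.den + q.den := by positivity
  have hcop : IsCoprime (p.num + q.num) (p.den + q.den : ℤ) :=
    ⟨-(q.den : ℤ), q.num, by linear_combination h⟩
  have hcop' := Int.isCoprime_iff_gcd_eq_one.mp hcop
  exact ⟨Rat.num_div_eq_of_coprime hden hcop', Rat.den_div_eq_of_coprime hden hcop'⟩

lemma insertMediants_getElem? {l : List ℚ} {i : ℕ} {p q : ℚ} (hp : l[i]? = some p)
    (hq : l[i + 1]? = some q) :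
    (insertMediants l)[2 * i]? = some p ∧ (insertMediants l)[2 * i + 1]? = some (mediant p q) ∧
      (insertMediants l)[2 * i + 2]? = some q := by
  induction l generalizing i with
  | nil => simp at hp
  | cons x xs ih =>
    rcases xs with _ | ⟨y, ys⟩
    · simp at hq
    rcases i with _ | i
    · obtain rfl : x = p := by simpa using hp
      obtain rfl : y = q := by simpa using hq
      cases ys <;> simp [insertMediants]
    · simpa [insertMediants, Nat.mul_succ] using ih (i := i) (by simpa using hp) (by simpa using hq)

lemma isFareyPairIn_zero : IsFareyPairIn 0 0 1 := ⟨0, rfl, rfl⟩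

lemma IsFareyPairIn.left_mediant {k : ℕ} {p q : ℚ} (h : IsFareyPairIn k p q) :
    IsFareyPairIn (k + 1) p (mediant p q) :=
  let ⟨i, hp, hq⟩ := h
  ⟨2 * i, (insertMediants_getElem? hp hq).1, (insertMediants_getElem? hp hq).2.1⟩

lemma IsFareyPairIn.mediant_right {k : ℕ} {p q : ℚ} (h : IsFareyPairIn k p q) :
    IsFareyPairIn (k + 1) (mediant p q) q :=
  let ⟨i, hp, hq⟩ := h
  ⟨2 * i + 1, (insertMediants_getElem? hp hq).2.1, (insertMediants_getElem? hp hq).2.2⟩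

def projPoint (v : ℤ × ℤ) : OnePoint ℝ := if v.2 = 0 then ∞ else ((v.1 / v.2 : ℝ) : OnePoint ℝ)

lemma projPoint_neg (v : ℤ × ℤ) : projPoint (-v) = projPoint v := by
  simp [projPoint, neg_div_neg_eq]

lemma projPoint_of_snd_ne_zero {u v : ℤ} (hv : v ≠ 0) :
    projPoint (u, v) = (((u / v : ℚ) : ℝ) : OnePoint ℝ) := by
  simp [projPoint, hv]

section mobSL

variable (M : SL(2, ℤ))

lemma mobSL_infty : mobSL M ∞ = projPoint (M 0 0, M 1 0) := by
  simp [mobSL, projPoint]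

lemma mobSL_zero : mobSL M (0 : ℝ) = projPoint (M 0 1, M 1 1) := by
  simp [mobSL, projPoint]

lemma mobSL_one : mobSL M (1 : ℝ) = projPoint (M 0 0 + M 0 1, M 1 0 + M 1 1) := by
  simp only [mobSL, mobAux_coe, map_apply, mul_one, projPoint, Int.cast_add]
  norm_cast

end mobSL

def colMatrix (u v : ℤ × ℤ) : Matrix (Fin 2) (Fin 2) ℤ := !![u.1, v.1; u.2, v.2]

lemma image_mobSL {M : SL(2, ℤ)} {u v : ℤ × ℤ}
    (hM : (M : Matrix (Fin 2) (Fin 2) ℤ) = colMatrix u v) :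
    mobSL M '' {((0 : ℝ) : OnePoint ℝ), ((1 : ℝ) : OnePoint ℝ), ∞} =
      {projPoint v, projPoint (u + v), projPoint u} := by
  rw [Set.image_insert_eq, Set.image_insert_eq, Set.image_singleton, mobSL_zero, mobSL_one,
    mobSL_infty, hM]
  rfl

lemma mk_neg_one : (QuotientGroup.mk (-1 : SL(2, ℤ)) : PSL(2, ℤ)) = 1 :=
  (QuotientGroup.eq_one_iff _).mpr (Subgroup.mem_center_iff.mpr fun g => by simp)

lemma mk_neg (M : SL(2, ℤ)) : (QuotientGroup.mk (-M) : PSL(2, ℤ)) = QuotientGroup.mk M := by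
  rw [← mul_neg_one, QuotientGroup.mk_mul, mk_neg_one, mul_one]

inductive Letter
  | a | b | c

namespace Letter

def next : Letter → Letter
  | a => b
  | b => c
  | c => a

lemma next_next_next (x : Letter) : x.next.next.next = x := by
  cases x <;> rfl

def toSL : Letter → SL(2, ℤ)
  | a => A
  | b => B
  | c => C

def toPSL (x : Letter) : PSL(2, ℤ) := QuotientGroup.mk x.toSL

lemma toPSL_eq_generator (x : Letter) :
    x.toPSL = Farey.a ∨ x.toPSL = Farey.b ∨ x.toPSL = Farey.c := by
  cases x
  exacts [Or.inl rfl, Or.inr (Or.inl rfl), Or.inr (Or.inr rfl)]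

lemma exists_toPSL_eq {s : PSL(2, ℤ)} (hs : s = Farey.a ∨ s = Farey.b ∨ s = Farey.c) :
    ∃ x : Letter, s = x.toPSL := by
  rcases hs with rfl | rfl | rfl
  exacts [⟨a, rfl⟩, ⟨b, rfl⟩, ⟨c, rfl⟩]

lemma toSL_mul_self (x : Letter) : x.toSL * x.toSL = -1 := by
  ext i j
  cases x <;> fin_cases i <;> fin_cases j <;> rfl

lemma toPSL_mul_self (x : Letter) : x.toPSL * x.toPSL = 1 := by
  rw [toPSL, ← QuotientGroup.mk_mul, x.toSL_mul_self, mk_neg_one]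

end Letter

/-- A triangle of the Farey tessellation met at depth `n`: `posFan` is `{n, n + 1, ∞}`,
`negFan` is `{-n, 1 - n, ∞}`, and `farey m k p q` is `{m + p, m + p ⊕ q, m + q}` with `p, q`
consecutive in `F_k`. -/
inductive Tile
  | posFan
  | negFan
  | farey (m : ℤ) (k : ℕ) (p q : ℚ)

namespace Tile

/-- Primitive integer vectors of the lowest and the highest vertex of the tile at depth `n`;
the middle vertex is represented by their sum. -/
def lo (n : ℕ) : Tile → ℤ × ℤ
  | posFan => (n, 1)
  | negFan => (-n, 1)
  | farey m _ p _ => (p.num + m * p.den, p.den)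

def hi : Tile → ℤ × ℤ
  | posFan => (1, 0)
  | negFan => (1, 0)
  | farey m _ _ q => (q.num + m * q.den, q.den)

def vertices (n : ℕ) (t : Tile) : Set (OnePoint ℝ) :=
  {projPoint (t.lo n), projPoint (t.lo n + t.hi), projPoint t.hi}

lemma vertices_posFan (n : ℕ) :
    posFan.vertices n = {((n : ℝ) : OnePoint ℝ), (((n : ℝ) + 1 : ℝ) : OnePoint ℝ), ∞} := by
  simp [vertices, lo, hi, projPoint]

lemma vertices_negFan (n : ℕ) :
    negFan.vertices n = {((-(n : ℝ) : ℝ) : OnePoint ℝ), ((1 - (n : ℝ) : ℝ) : OnePoint ℝ), ∞} := by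
  simp [vertices, lo, hi, projPoint, neg_add_eq_sub]

lemma vertices_farey (n : ℕ) (m : ℤ) (k : ℕ) (p q : ℚ) :
    (farey m k p q).vertices n =
      {(((m + p : ℚ) : ℝ) : OnePoint ℝ), (((m + mediant p q : ℚ) : ℝ) : OnePoint ℝ),
        (((m + q : ℚ) : ℝ) : OnePoint ℝ)} := by
  have hlo (r : ℚ) : projPoint (r.num + m * r.den, r.den) = (((m + r : ℚ) : ℝ) : OnePoint ℝ) := by
    rw [projPoint_of_snd_ne_zero (by simp)]
    congr 2
    push_cast
    rw [add_div, Rat.num_div_den, mul_div_cancel_right₀ _ (by positivity), add_comm]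
  have hmid : projPoint ((p.num + m * p.den) + (q.num + m * q.den), (p.den : ℤ) + q.den) =
      (((m + mediant p q : ℚ) : ℝ) : OnePoint ℝ) := by
    rw [projPoint_of_snd_ne_zero (by positivity)]
    congr 2
    simp only [mediant]
    field_simp
    push_cast
    ring
  rw [vertices, lo, hi, Prod.mk_add_mk, hlo, hmid, hlo]

def leftChild (n : ℕ) : Tile → Tile
  | posFan => farey n 0 0 1
  | negFan => farey (-n) 0 0 1
  | farey m k p q => farey m (k + 1) p (mediant p q)

/-- `negFan` has a right child only at depth `0`, where it is the base triangle `{0, 1, ∞}`,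
which is also `posFan`. -/
def rightChild : Tile → Tile
  | posFan => posFan
  | negFan => posFan
  | farey m k p q => farey m (k + 1) (mediant p q) q

lemma leftChild_ne_negFan (n : ℕ) (t : Tile) : t.leftChild n ≠ negFan := by
  cases t <;> simp [leftChild]

lemma rightChild_ne_negFan (t : Tile) : t.rightChild ≠ negFan := by
  cases t <;> simp [rightChild]

def Valid (n : ℕ) : Tile → Prop
  | farey m k p q =>
    IsFareyPairIn k p q ∧ (n : ℤ) = k + |m| + 1 ∧ q.num * p.den - p.num * q.den = 1
  | _ => True

lemma valid_leftChild {n : ℕ} {t : Tile} (ht : t.Valid n) : (t.leftChild n).Valid (n + 1) := by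
  cases t with
  | farey m k p q =>
    obtain ⟨hpair, hdepth, hdet⟩ := ht
    obtain ⟨hnum, hden⟩ := mediant_num_den hdet
    exact ⟨hpair.left_mediant, by push_cast; omega, by rw [hnum, hden]; linear_combination hdet⟩
  | _ => exact ⟨isFareyPairIn_zero, by simp, by simp⟩

lemma valid_rightChild {n : ℕ} {t : Tile} (ht : t.Valid n) : t.rightChild.Valid (n + 1) := by
  cases t with
  | farey m k p q =>
    obtain ⟨hpair, hdepth, hdet⟩ := ht
    obtain ⟨hnum, hden⟩ := mediant_num_den hdet
    exact ⟨hpair.mediant_right, by push_cast; omega, by rw [hnum, hden]; linear_combination hdet⟩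
  | _ => trivial

lemma lo_leftChild (n : ℕ) (t : Tile) : (t.leftChild n).lo (n + 1) = t.lo n := by
  cases t <;> simp [leftChild, lo]

lemma hi_leftChild {n : ℕ} {t : Tile} (ht : t.Valid n) :
    (t.leftChild n).hi = t.lo n + t.hi := by
  cases t with
  | farey m k p q =>
    obtain ⟨hnum, hden⟩ := mediant_num_den ht.2.2
    simp only [leftChild, hi, lo, hnum, hden, Prod.mk_add_mk, Prod.mk.injEq, and_true]
    ring
  | _ => simp [leftChild, hi, lo, add_comm]

lemma lo_rightChild {n : ℕ} {t : Tile} (ht : t.Valid n) (hroot : t ≠ negFan ∨ n = 0) :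
    t.rightChild.lo (n + 1) = t.lo n + t.hi := by
  cases t with
  | farey m k p q =>
    obtain ⟨hnum, hden⟩ := mediant_num_den ht.2.2
    simp only [rightChild, hi, lo, hnum, hden, Prod.mk_add_mk, Prod.mk.injEq, and_true]
    ring
  | posFan => simp [rightChild, hi, lo]
  | negFan =>
    obtain rfl : n = 0 := by simpa using hroot
    simp [rightChild, hi, lo]

lemma hi_rightChild (t : Tile) : t.rightChild.hi = t.hi := by
  cases t <;> rfl

lemma lo_negFan_succ (n : ℕ) : negFan.lo (n + 1) = negFan.lo n - negFan.hi := by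
  simp only [lo, hi, Prod.mk_sub_mk, sub_zero, Prod.mk.injEq, and_true]
  push_cast
  ring

end Tile

/-- The three matrices sending `0, 1, ∞` onto the points represented by `X, X + Z, Z` up to a
cyclic rotation, which the letter selects. -/
def tileMatrix (X Z : ℤ × ℤ) : Letter → Matrix (Fin 2) (Fin 2) ℤ
  | .a => colMatrix X (-(X + Z))
  | .b => colMatrix Z X
  | .c => colMatrix (-(X + Z)) Z

lemma image_mobSL_of_eq_tileMatrix {X Z : ℤ × ℤ} {x : Letter} {M : SL(2, ℤ)}
    (hM : (M : Matrix (Fin 2) (Fin 2) ℤ) = tileMatrix X Z x) :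
    mobSL M '' {((0 : ℝ) : OnePoint ℝ), ((1 : ℝ) : OnePoint ℝ), ∞} =
      {projPoint X, projPoint (X + Z), projPoint Z} := by
  cases x <;> rw [image_mobSL hM]
  · rw [show X + -(X + Z) = -Z by abel, projPoint_neg, projPoint_neg]
    ext; simp only [Set.mem_insert_iff, Set.mem_singleton_iff]; tauto
  · rw [add_comm Z]
  · rw [show -(X + Z) + Z = -X by abel, projPoint_neg, projPoint_neg]
    ext; simp only [Set.mem_insert_iff, Set.mem_singleton_iff]; tauto

lemma tileMatrix_mul_toSL (X Z : ℤ × ℤ) (x : Letter) :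
    tileMatrix X Z x * x.toSL = -tileMatrix (X - Z) Z x.next := by
  ext i j
  cases x <;> fin_cases i <;> fin_cases j <;>
    simp [tileMatrix, colMatrix, Letter.next, Letter.toSL, A, B, C, Matrix.mul_apply] <;> ring

lemma tileMatrix_mul_toSL_next (X Z : ℤ × ℤ) (x : Letter) :
    tileMatrix X Z x * x.next.toSL = -tileMatrix X (X + Z) x.next := by
  ext i j
  cases x <;> fin_cases i <;> fin_cases j <;>
    simp [tileMatrix, colMatrix, Letter.next, Letter.toSL, A, B, C, Matrix.mul_apply] <;> ring

lemma tileMatrix_mul_toSL_next_next (X Z : ℤ × ℤ) (x : Letter) :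
    tileMatrix X Z x * x.next.next.toSL = tileMatrix (X + Z) Z x.next.next := by
  ext i j
  cases x <;> fin_cases i <;> fin_cases j <;>
    simp [tileMatrix, colMatrix, Letter.next, Letter.toSL, A, B, C, Matrix.mul_apply] <;> ring

open Tile in
/-- `g` is reached from `1` by a reduced word of length `n`, sends `{0, 1, ∞}` to the tile `t`
at depth `n`, and is represented by `tileMatrix _ _ x`. -/
inductive IsNode : ℕ → PSL(2, ℤ) → Tile → Letter → Prop
  | root : IsNode 0 1 negFan .b
  | spine {n g x} : IsNode n g negFan x → IsNode (n + 1) (g * x.toPSL) negFan x.next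
  | left {n g t x} : IsNode n g t x → IsNode (n + 1) (g * x.next.toPSL) (t.leftChild n) x.next
  | right {n g t x} : IsNode n g t x → t ≠ negFan ∨ n = 0 →
      IsNode (n + 1) (g * x.next.next.toPSL) t.rightChild x.next.next

namespace IsNode

variable {n : ℕ} {g : PSL(2, ℤ)} {t : Tile} {x : Letter}

lemma valid (h : IsNode n g t x) : t.Valid n := by
  induction h with
  | root | spine => trivial
  | left _ ih => exact Tile.valid_leftChild ih
  | right _ _ ih => exact Tile.valid_rightChild ih

lemma exists_matrix (h : IsNode n g t x) :
    ∃ M : SL(2, ℤ), (M : Matrix (Fin 2) (Fin 2) ℤ) = tileMatrix (t.lo n) t.hi x ∧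
      g = QuotientGroup.mk M := by
  induction h with
  | root =>
    refine ⟨1, ?_, rfl⟩
    ext i j
    fin_cases i <;> fin_cases j <;> rfl
  | @spine n g x _ ih =>
    obtain ⟨M, hM, rfl⟩ := ih
    refine ⟨-(M * x.toSL), ?_, by rw [mk_neg]; rfl⟩
    rw [Matrix.SpecialLinearGroup.coe_neg, Matrix.SpecialLinearGroup.coe_mul, hM,
      tileMatrix_mul_toSL, neg_neg, Tile.lo_negFan_succ]
  | @left n g t x hnode ih =>
    obtain ⟨M, hM, rfl⟩ := ih
    refine ⟨-(M * x.next.toSL), ?_, by rw [mk_neg]; rfl⟩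
    rw [Matrix.SpecialLinearGroup.coe_neg, Matrix.SpecialLinearGroup.coe_mul, hM,
      tileMatrix_mul_toSL_next, neg_neg, Tile.lo_leftChild, Tile.hi_leftChild hnode.valid]
  | @right n g t x hnode hroot ih =>
    obtain ⟨M, hM, rfl⟩ := ih
    refine ⟨M * x.next.next.toSL, ?_, rfl⟩
    rw [Matrix.SpecialLinearGroup.coe_mul, hM, tileMatrix_mul_toSL_next_next,
      Tile.lo_rightChild hnode.valid hroot, Tile.hi_rightChild]

lemma image (h : IsNode n g t x) :
    mob g '' {((0 : ℝ) : OnePoint ℝ), ((1 : ℝ) : OnePoint ℝ), ∞} = t.vertices n := by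
  obtain ⟨M, hM, rfl⟩ := h.exists_matrix
  exact image_mobSL_of_eq_tileMatrix hM

lemma exists_parent_of_ne_negFan (h : IsNode n g t x) (ht : t ≠ .negFan) :
    ∃ n₀ t₀ x₀, n = n₀ + 1 ∧ IsNode n₀ (g * x.toPSL) t₀ x₀ := by
  cases h with
  | root | spine => exact absurd rfl ht
  | left h₀ => exact ⟨_, _, _, rfl, by rwa [mul_assoc, Letter.toPSL_mul_self, mul_one]⟩
  | right h₀ => exact ⟨_, _, _, rfl, by rwa [mul_assoc, Letter.toPSL_mul_self, mul_one]⟩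

lemma exists_parent_of_negFan (h : IsNode (n + 1) g t x) (ht : t = .negFan) :
    ∃ t₀ x₀, IsNode n (g * x.next.next.toPSL) t₀ x₀ := by
  cases h with
  | spine h₀ =>
    exact ⟨_, _, by rwa [Letter.next_next_next, mul_assoc, Letter.toPSL_mul_self, mul_one]⟩
  | left => exact absurd ht (Tile.leftChild_ne_negFan _ _)
  | right => exact absurd ht (Tile.rightChild_ne_negFan _)

lemma child_or_parent (h : IsNode n g t x) (y : Letter) :
    (∃ t' y', IsNode (n + 1) (g * y.toPSL) t' y') ∨
      ∃ n₀ t₀ y₀, n = n₀ + 1 ∧ IsNode n₀ (g * y.toPSL) t₀ y₀ := by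
  obtain rfl | rfl | rfl : y = x ∨ y = x.next ∨ y = x.next.next := by
    cases x <;> cases y <;> simp [Letter.next]
  · by_cases ht : t = .negFan
    · subst ht
      exact .inl ⟨_, _, h.spine⟩
    · exact .inr (h.exists_parent_of_ne_negFan ht)
  · exact .inl ⟨_, _, h.left⟩
  · by_cases hroot : t ≠ .negFan ∨ n = 0
    · exact .inl ⟨_, _, h.right hroot⟩
    · rw [not_or, not_not] at hroot
      obtain ⟨n, rfl⟩ := Nat.exists_eq_succ_of_ne_zero hroot.2
      obtain ⟨t₀, y₀, hparent⟩ := h.exists_parent_of_negFan hroot.1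
      exact .inr ⟨n, t₀, y₀, rfl, hparent⟩

end IsNode

def HasWordOfLength (g : PSL(2, ℤ)) (n : ℕ) : Prop :=
  ∃ l : List PSL(2, ℤ), l.length = n ∧ (∀ s ∈ l, s = a ∨ s = b ∨ s = c) ∧ l.prod = g

lemma wordLength_le {g : PSL(2, ℤ)} {n : ℕ} (h : HasWordOfLength g n) : wordLength g ≤ n :=
  Nat.sInf_le h

lemma hasWordOfLength_wordLength {g : PSL(2, ℤ)} {n : ℕ} (h : HasWordOfLength g n) :
    HasWordOfLength g (wordLength g) :=
  Nat.sInf_mem (s := {m | HasWordOfLength g m}) ⟨n, h⟩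

lemma HasWordOfLength.mul_toPSL {g : PSL(2, ℤ)} {n : ℕ} (h : HasWordOfLength g n)
    (y : Letter) : HasWordOfLength (g * y.toPSL) (n + 1) := by
  obtain ⟨l, rfl, hl, rfl⟩ := h
  refine ⟨l ++ [y.toPSL], by simp, ?_, by simp⟩
  simp only [List.mem_append, List.mem_singleton]
  rintro s (hs | rfl)
  exacts [hl s hs, y.toPSL_eq_generator]

lemma wordLength_mul_toPSL_le {g : PSL(2, ℤ)} {n : ℕ} (h : HasWordOfLength g n) (y : Letter) :
    wordLength (g * y.toPSL) ≤ wordLength g + 1 :=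
  wordLength_le ((hasWordOfLength_wordLength h).mul_toPSL y)

lemma IsNode.hasWordOfLength {n : ℕ} {g : PSL(2, ℤ)} {t : Tile} {x : Letter}
    (h : IsNode n g t x) : HasWordOfLength g n := by
  induction h with
  | root => exact ⟨[], rfl, by simp, rfl⟩
  | spine _ ih | left _ ih | right _ _ ih => exact ih.mul_toPSL _

/-- A minimal word descends the tree: a step back to a parent would give a shorter word. -/
lemma exists_isNode_of_wordLength_eq (l : List PSL(2, ℤ)) (hl : ∀ s ∈ l, s = a ∨ s = b ∨ s = c)
    (hmin : wordLength l.prod = l.length) : ∃ t x, IsNode l.length l.prod t x := by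
  induction l using List.reverseRecOn with
  | nil => exact ⟨_, _, .root⟩
  | append_singleton l s ih =>
    obtain ⟨y, rfl⟩ := Letter.exists_toPSL_eq (hl s (by simp))
    have hword : HasWordOfLength l.prod l.length :=
      ⟨l, rfl, fun s hs => hl s (by simp [hs]), rfl⟩
    simp only [List.prod_append, List.prod_singleton, List.length_append,
      List.length_singleton] at hmin ⊢
    have hmin' : wordLength l.prod = l.length :=
      le_antisymm (wordLength_le hword) (by linarith [wordLength_mul_toPSL_le hword y])
    obtain ⟨t, x, hnode⟩ := ih (fun s hs => hl s (by simp [hs])) hmin'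
    rcases hnode.child_or_parent y with hchild | ⟨n₀, t₀, y₀, hn₀, hparent⟩
    · exact hchild
    · have := wordLength_le hparent.hasWordOfLength
      omega

lemma exists_isNode_of_wordLength_pos {g : PSL(2, ℤ)} (h : 0 < wordLength g) :
    ∃ t x, IsNode (wordLength g) g t x := by
  obtain ⟨l, hlen, hl, rfl⟩ : HasWordOfLength g (wordLength g) :=
    Nat.sInf_mem (Nat.nonempty_of_pos_sInf h)
  rw [← hlen]
  exact exists_isNode_of_wordLength_eq l hl hlen.symm

end Farey

open Farey

theorem word_length_farey_all_tiles_general (g : PSL(2, ℤ)) (n : ℕ)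
    (hn : 0 < n) (hlen : wordLength g = n) :
    mob g '' {((0 : ℝ) : OnePoint ℝ), ((1 : ℝ) : OnePoint ℝ), ∞} =
        {(((n : ℝ)) : OnePoint ℝ), (((n : ℝ) + 1 : ℝ) : OnePoint ℝ), ∞} ∨
    mob g '' {((0 : ℝ) : OnePoint ℝ), ((1 : ℝ) : OnePoint ℝ), ∞} =
        {((-(n : ℝ) : ℝ) : OnePoint ℝ), ((1 - (n : ℝ) : ℝ) : OnePoint ℝ), ∞} ∨
    ∃ (m : ℤ) (k : ℕ) (p q : ℚ), (n : ℤ) = k + |m| + 1 ∧ IsFareyPairIn k p q ∧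
      mob g '' {((0 : ℝ) : OnePoint ℝ), ((1 : ℝ) : OnePoint ℝ), ∞} =
        {(((m + p : ℚ) : ℝ) : OnePoint ℝ), (((m + mediant p q : ℚ) : ℝ) : OnePoint ℝ),
          (((m + q : ℚ) : ℝ) : OnePoint ℝ)} := by
  subst hlen
  obtain ⟨t, x, hnode⟩ := exists_isNode_of_wordLength_pos hn
  rw [hnode.image]
  cases t with
  | posFan => exact .inl (Tile.vertices_posFan _)
  | negFan => exact .inr (.inl (Tile.vertices_negFan _))
  | farey m k p q =>
    obtain ⟨hpair, hdepth, -⟩ := hnode.valid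
    exact .inr (.inr ⟨m, k, p, q, hdepth, hpair, Tile.vertices_farey _ m k p q⟩)

/-- **Lemma (classification of tiles by word length).** Let `g` be an element of the Farey
group with `‖g‖ = n > 0` and consider the image of `{0,1,∞}` under the Möbius transformation
`g` (whose elements, listed increasingly, are `p < r < q ≤ ∞`).  Then either the image is
`{n, n+1, ∞}`, or it is `{−n, 1−n, ∞}`, or there are `m ∈ ℤ` and a pair `p', q'` of
consecutive terms of `F_{n−|m|−1}` such that the image is
`{m + p', m + (p' ⊕ q'), m + q'}`. -/
theorem word_length_farey_all_tiles (g : PSL(2, ℤ)) (hg : g ∈ fareyGroup) (n : ℕ)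
    (hn : 0 < n) (hlen : wordLength g = n) :
    mob g '' {((0 : ℝ) : OnePoint ℝ), ((1 : ℝ) : OnePoint ℝ), ∞} =
        {(((n : ℝ)) : OnePoint ℝ), (((n : ℝ) + 1 : ℝ) : OnePoint ℝ), ∞} ∨
    mob g '' {((0 : ℝ) : OnePoint ℝ), ((1 : ℝ) : OnePoint ℝ), ∞} =
        {((-(n : ℝ) : ℝ) : OnePoint ℝ), ((1 - (n : ℝ) : ℝ) : OnePoint ℝ), ∞} ∨
    ∃ (m : ℤ) (k : ℕ) (p q : ℚ), (n : ℤ) = k + |m| + 1 ∧ IsFareyPairIn k p q ∧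
      mob g '' {((0 : ℝ) : OnePoint ℝ), ((1 : ℝ) : OnePoint ℝ), ∞} =
        {(((m + p : ℚ) : ℝ) : OnePoint ℝ), (((m + mediant p q : ℚ) : ℝ) : OnePoint ℝ),
          (((m + q : ℚ) : ℝ) : OnePoint ℝ)} :=
  word_length_farey_all_tiles_general g n hn hlen
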